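/- arXiv:0811.3682 — 2 statements merged into one kernel-verified Lean document; each statement's English description precedes it below -/
import Mathlib

section
/- Let 0<q<p, p+q≤1, ρ=p/q. For the transient random walk on ℤ≥0 with forward p, backward q, holding r, and partial reflection α at 0, started at i₀, the identity P(escape to +∞) = (p-q)·x_k holds for every k≥i₀, where x_k is the expected number of visits to state k. -/
/-!
Summing the balance equations from `0` to `k` expresses the net downward flow across the edge
`{k, k+1}` through the absorption probability `(1 - α) x 0`. Beyond `i₀` this is a first-order
affine recurrence for `x` with ratio `ρ = p / q > 1`, whose only bounded solution is its constant
fixed point; that constant gives `(p - q) x k = 1 - (1 - α) x 0`.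
-/

lemma eq_zero_of_bounded_of_succ_eq_mul {a : ℕ → ℝ} {ρ : ℝ} (hρ : 1 < ρ)
    (ha : ∀ n, a (n + 1) = ρ * a n) (hbdd : ∃ C, ∀ n, |a n| ≤ C) : a 0 = 0 := by
  have hpow : ∀ n, a n = ρ ^ n * a 0 := by
    intro n
    induction n with
    | zero => simp
    | succ n ih => rw [ha, ih, pow_succ]; ring
  obtain ⟨C, hC⟩ := hbdd
  by_contra h
  have hpos : 0 < |a 0| := abs_pos.mpr h
  obtain ⟨n, hn⟩ := pow_unbounded_of_one_lt (C / |a 0|) hρ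
  have hbound := hC n
  rw [hpow, abs_mul, abs_of_pos (pow_pos (zero_lt_one.trans hρ) n)] at hbound
  rw [div_lt_iff₀ hpos] at hn
  linarith

lemma mul_sub_eq_of_bounded_of_mul_succ_sub_mul_eq {y : ℕ → ℝ} {p q d : ℝ} (hq : 0 < q)
    (hqp : q < p) (hy : ∀ n, q * y (n + 1) - p * y n = d) (hbdd : ∃ C, ∀ n, |y n| ≤ C) :
    (q - p) * y 0 = d := by
  obtain ⟨C, hC⟩ := hbdd
  have hdev : (q - p) * y 0 - d = 0 := by
    refine eq_zero_of_bounded_of_succ_eq_mul (a := fun n => (q - p) * y n - d)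
      ((one_lt_div hq).mpr hqp) (fun n => ?_)
      ⟨(p - q) * C + |d|, fun n => ?_⟩
    · field_simp
      linear_combination (q - p) * hy n
    · calc |(q - p) * y n - d| ≤ |(q - p) * y n| + |d| := abs_sub _ _
        _ = (p - q) * |y n| + |d| := by rw [abs_mul, abs_of_neg (by linarith)]; ring
        _ ≤ (p - q) * C + |d| := by
          gcongr
          exact hC n
  linarith

/-- `q x(k+1) - p x k` is the expected net number of downward crossings of the edge `{k, k+1}`. -/
lemma mul_succ_sub_mul_eq_absorption_sub_indicator {p q r α : ℝ} (hr : r = 1 - p - q) {i₀ : ℕ}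
    (hi₀ : 1 ≤ i₀) {x : ℕ → ℝ} (h0 : x 0 = q * x 1)
    (h1 : x 1 = (if i₀ = 1 then (1 : ℝ) else 0) + α * x 0 + q * x 2 + r * x 1)
    (hk : ∀ k, 2 ≤ k →
      x k = (if k = i₀ then (1 : ℝ) else 0) + p * x (k - 1) + q * x (k + 1) + r * x k)
    (k : ℕ) (hk1 : 1 ≤ k) :
    q * x (k + 1) - p * x k = (1 - α) * x 0 - if i₀ ≤ k then 1 else 0 := by
  subst hr
  induction k, hk1 using Nat.le_induction with
  | base =>
    have hind : (if i₀ ≤ 1 then (1 : ℝ) else 0) = if i₀ = 1 then 1 else 0 := by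
      congr 1; exact propext (by omega)
    rw [hind]
    linarith
  | succ k hk1 ih =>
    have hbalance := hk (k + 1) (by omega)
    rw [Nat.add_sub_cancel] at hbalance
    have hind : (if i₀ ≤ k + 1 then (1 : ℝ) else 0) =
        (if i₀ ≤ k then 1 else 0) + if k + 1 = i₀ then 1 else 0 := by
      split_ifs <;> first | omega | norm_num
    rw [hind]
    linarith

theorem stmt6_general (p q r α : ℝ) (hq : 0 < q) (hqp : q < p)
    (hr : r = 1 - p - q)
    (i₀ : ℕ) (hi₀ : 1 ≤ i₀) (x : ℕ → ℝ)
    (h0 : x 0 = q * x 1)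
    (h1 : x 1 = (if i₀ = 1 then (1 : ℝ) else 0) + α * x 0 + q * x 2 + r * x 1)
    (hk : ∀ k, 2 ≤ k →
      x k = (if k = i₀ then (1 : ℝ) else 0) + p * x (k - 1) + q * x (k + 1) + r * x k)
    (hbdd : ∃ C, ∀ k, |x k| ≤ C) :
    ∀ k, i₀ ≤ k → 1 - (1 - α) * x 0 = (p - q) * x k := by
  intro k hik
  have hflux : ∀ n, q * x (k + n + 1) - p * x (k + n) = (1 - α) * x 0 - 1 := fun n => by
    rw [mul_succ_sub_mul_eq_absorption_sub_indicator hr hi₀ h0 h1 hk (k + n) (by omega),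
      if_pos (by omega)]
  obtain ⟨C, hC⟩ := hbdd
  have hfixed := mul_sub_eq_of_bounded_of_mul_succ_sub_mul_eq (y := fun n => x (k + n)) hq hqp
    hflux ⟨C, fun n => hC (k + n)⟩
  simp only [add_zero] at hfixed
  linarith

/-- For the transient walk on ℕ with partial reflection α at 0 started at i₀, the escape
    probability 1-(1-α)x_0 equals (p-q)·x_k for every k ≥ i₀, where x is the (bounded)
    expected-visits function. -/
theorem stmt6 (p q r α : ℝ) (hq : 0 < q) (hqp : q < p) (hpq : p + q ≤ 1)
    (hr : r = 1 - p - q) (hα0 : 0 ≤ α) (hα1 : α < 1)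
    (i₀ : ℕ) (hi₀ : 1 ≤ i₀) (x : ℕ → ℝ)
    (h0 : x 0 = q * x 1)
    (h1 : x 1 = (if i₀ = 1 then (1 : ℝ) else 0) + α * x 0 + q * x 2 + r * x 1)
    (hk : ∀ k, 2 ≤ k →
      x k = (if k = i₀ then (1 : ℝ) else 0) + p * x (k - 1) + q * x (k + 1) + r * x k)
    (hbdd : ∃ C, ∀ k, |x k| ≤ C) :
    ∀ k, i₀ ≤ k → 1 - (1 - α) * x 0 = (p - q) * x k :=
  stmt6_general p q r α hq hqp hr i₀ hi₀ x h0 h1 hk hbdd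
end

section
/- Consider the random walk on ℤ with parameters p,q>0, p+q≤1, r=1-p-q, ρ=p/q≠1, and two multiple-function barriers at 0 and N>0: at 0 the probabilities are p₀ (to +1), q₀ (to -1), r₀ (stay), s₀ (absorb) with p₀+q₀+r₀+s₀=1 and p₀q₀s₀>0; similarly p_N,q_N,r_N,s_N at N. Starting at i₀ with 0<i₀<N, the expected number y₀ of visits to 0 equals [(1-ρ^{N-i₀})(s_N + p_N(1-ρ^{-1})) + q_N(1-ρ)] / ([s₀(1-ρ^N) + p₀(ρ^{N-1}-ρ^N)][s_N + p_N(1-ρ^{-1})] + s₀q_N(1-ρ)]. -/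
/-!
The system is solved by Cramer's rule. Writing `D = 1 - ρ^N`, `A = s₀(1 - ρ^N) + p₀(ρ^(N-1) - ρ^N)`
and `B = s_N + p_N(1 - ρ⁻¹)`, the determinant of the system is `(A B + s₀ q_N (1 - ρ)) / D` and
the Cramer numerator for `y₀` is `((1 - ρ^(N-i₀)) B + q_N (1 - ρ)) / D`. The determinant cannot
vanish: otherwise the numerator vanishes too, and then `B` can be eliminated between the two,
leaving `q_N (1 - ρ) (s₀ (ρ^(N-i₀) - ρ^N) + p₀ (ρ^(N-1) - ρ^N)) = 0`, whereas both
differences of powers there have the sign of `1 - ρ` for `ρ > 0`.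
-/

theorem det_mul_fst_of_linear_system {R : Type*} [CommRing R] {a b c d e f x y : R}
    (h₁ : a * x + b * y = e) (h₂ : c * x + d * y = f) :
    (a * d - b * c) * x = e * d - b * f := by
  linear_combination d * h₁ - b * h₂

theorem mul_sub_pow_add_mul_sub_pow_ne_zero {ρ s p : ℝ} {k m n : ℕ} (hρ : 0 < ρ) (hρ1 : ρ ≠ 1)
    (hs : 0 ≤ s) (hp : 0 < p) (hk : k ≤ n) (hm : m < n) :
    s * (ρ ^ k - ρ ^ n) + p * (ρ ^ m - ρ ^ n) ≠ 0 := by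
  rcases lt_or_gt_of_ne hρ1 with h | h
  · have hk' : ρ ^ n ≤ ρ ^ k := pow_le_pow_of_le_one hρ.le h.le hk
    have hm' : ρ ^ n < ρ ^ m := pow_lt_pow_right_of_lt_one₀ hρ h hm
    exact (add_pos_of_nonneg_of_pos (mul_nonneg hs (sub_nonneg.2 hk'))
      (mul_pos hp (sub_pos.2 hm'))).ne'
  · have hk' : ρ ^ k ≤ ρ ^ n := pow_le_pow_right₀ h.le hk
    have hm' : ρ ^ m < ρ ^ n := pow_lt_pow_right₀ h hm
    exact (add_neg_of_nonpos_of_neg (mul_nonpos_of_nonneg_of_nonpos hs (sub_nonpos.2 hk'))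
      (mul_neg_of_pos_of_neg hp (sub_neg.2 hm'))).ne

theorem barrier_system_fst_eq {ρ x b p₀ q₀ r₀ s₀ pN qN rN sN y₀ y₁ : ℝ}
    (hρ : ρ ≠ 0) (hD : 1 - x * ρ ≠ 0)
    (hC : qN * (1 - ρ) * (s₀ * (b - x * ρ) + p₀ * (x - x * ρ)) ≠ 0)
    (hsum0 : p₀ + q₀ + r₀ + s₀ = 1) (hsumN : pN + qN + rN + sN = 1)
    (heq0 : (r₀ - 1 + (1 - x) / (1 - x * ρ) * p₀ + q₀) * y₀
        + ((1 - ρ) / (1 - x * ρ) * qN) * y₁ = -((1 - b) / (1 - x * ρ)))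
    (heq1 : ((1 - ρ) * x / (1 - x * ρ) * p₀) * y₀
        + (rN - 1 + ρ * (1 - x) / (1 - x * ρ) * qN + pN * ρ⁻¹) * y₁
        = (1 - b) / (1 - x * ρ) - 1) :
    y₀ = ((1 - b) * (sN + pN * (1 - ρ⁻¹)) + qN * (1 - ρ)) /
        ((s₀ * (1 - x * ρ) + p₀ * (x - x * ρ)) * (sN + pN * (1 - ρ⁻¹)) + s₀ * qN * (1 - ρ)) := by
  set A := s₀ * (1 - x * ρ) + p₀ * (x - x * ρ)
  set B := sN + pN * (1 - ρ⁻¹)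
  obtain rfl : r₀ = 1 - p₀ - q₀ - s₀ := by linarith
  obtain rfl : rN = 1 - pN - qN - sN := by linarith
  have hcramer := det_mul_fst_of_linear_system heq0 heq1
  have hdet : (A * B + s₀ * qN * (1 - ρ)) * y₀ = (1 - b) * B + qN * (1 - ρ) := by
    simp only [A, B]
    field_simp at hcramer ⊢
    apply mul_left_cancel₀ hD
    linear_combination hcramer
  have hden : A * B + s₀ * qN * (1 - ρ) ≠ 0 := by
    intro h
    have hnum : (1 - b) * B + qN * (1 - ρ) = 0 := by rw [← hdet, h, zero_mul]
    exact hC (by linear_combination A * hnum - (1 - b) * h)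
  rw [eq_div_iff hden]
  linear_combination hdet

theorem stmt10_general (p q ρ : ℝ) (hp : 0 < p) (hq : 0 < q)
    (hρ : ρ = p / q) (hρ1 : ρ ≠ 1)
    (N i₀ : ℕ) (hN : 0 < N)
    (p₀ q₀ r₀ s₀ pN qN rN sN : ℝ)
    (hsum0 : p₀ + q₀ + r₀ + s₀ = 1) (hp₀ : 0 < p₀) (hs₀ : 0 < s₀)
    (hsumN : pN + qN + rN + sN = 1) (hqN : 0 < qN)
    (y₀ y₁ : ℝ)
    (heq0 : (r₀ - 1 + (1 - ρ ^ (N - 1)) / (1 - ρ ^ N) * p₀ + q₀) * y₀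
        + ((1 - ρ) / (1 - ρ ^ N) * qN) * y₁ = -((1 - ρ ^ (N - i₀)) / (1 - ρ ^ N)))
    (heq1 : ((1 - ρ) * ρ ^ (N - 1) / (1 - ρ ^ N) * p₀) * y₀
        + (rN - 1 + ρ * (1 - ρ ^ (N - 1)) / (1 - ρ ^ N) * qN + pN * ρ⁻¹) * y₁
        = (1 - ρ ^ (N - i₀)) / (1 - ρ ^ N) - 1) :
    y₀ = ((1 - ρ ^ (N - i₀)) * (sN + pN * (1 - ρ⁻¹)) + qN * (1 - ρ)) /
        ((s₀ * (1 - ρ ^ N) + p₀ * (ρ ^ (N - 1) - ρ ^ N)) * (sN + pN * (1 - ρ⁻¹))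
          + s₀ * qN * (1 - ρ)) := by
  have hρ0 : 0 < ρ := hρ ▸ div_pos hp hq
  have hD : 1 - ρ ^ N ≠ 0 :=
    sub_ne_zero.2 fun h ↦ hρ1 ((pow_eq_one_iff_of_nonneg hρ0.le hN.ne').1 h.symm)
  have hC : qN * (1 - ρ) * (s₀ * (ρ ^ (N - i₀) - ρ ^ N) + p₀ * (ρ ^ (N - 1) - ρ ^ N)) ≠ 0 :=
    mul_ne_zero (mul_ne_zero hqN.ne' (sub_ne_zero.2 hρ1.symm))
      (mul_sub_pow_add_mul_sub_pow_ne_zero hρ0 hρ1 hs₀.le hp₀ (Nat.sub_le N i₀) (by omega))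
  have hpow : ρ ^ N = ρ ^ (N - 1) * ρ := by rw [← pow_succ, Nat.sub_add_cancel hN]
  rw [hpow] at hD hC heq0 heq1 ⊢
  exact barrier_system_fst_eq hρ0.ne' hD hC hsum0 hsumN heq0 heq1

/-- Two multiple-function barriers at 0 and N on ℤ, ρ = p/q ≠ 1, start at 0 < i₀ < N:
    any solution (y₀,y₁) of the 2×2 linear system of Theorem 2.1 (the expected numbers of
    visits to the barriers) is given by the explicit formula for y₀. -/
theorem stmt10 (p q ρ : ℝ) (hp : 0 < p) (hq : 0 < q) (hpq : p + q ≤ 1)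
    (hρ : ρ = p / q) (hρ1 : ρ ≠ 1)
    (N i₀ : ℕ) (hN : 0 < N) (hi₀ : 0 < i₀) (hi₀N : i₀ < N)
    (p₀ q₀ r₀ s₀ pN qN rN sN : ℝ)
    (hsum0 : p₀ + q₀ + r₀ + s₀ = 1) (hp₀ : 0 < p₀) (hq₀ : 0 < q₀) (hs₀ : 0 < s₀)
    (hr₀ : 0 ≤ r₀)
    (hsumN : pN + qN + rN + sN = 1) (hpN : 0 < pN) (hqN : 0 < qN) (hsN : 0 < sN)
    (hrN : 0 ≤ rN)
    (y₀ y₁ : ℝ)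
    (heq0 : (r₀ - 1 + (1 - ρ ^ (N - 1)) / (1 - ρ ^ N) * p₀ + q₀) * y₀
        + ((1 - ρ) / (1 - ρ ^ N) * qN) * y₁ = -((1 - ρ ^ (N - i₀)) / (1 - ρ ^ N)))
    (heq1 : ((1 - ρ) * ρ ^ (N - 1) / (1 - ρ ^ N) * p₀) * y₀
        + (rN - 1 + ρ * (1 - ρ ^ (N - 1)) / (1 - ρ ^ N) * qN + pN * ρ⁻¹) * y₁
        = (1 - ρ ^ (N - i₀)) / (1 - ρ ^ N) - 1) :
    y₀ = ((1 - ρ ^ (N - i₀)) * (sN + pN * (1 - ρ⁻¹)) + qN * (1 - ρ)) /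
        ((s₀ * (1 - ρ ^ N) + p₀ * (ρ ^ (N - 1) - ρ ^ N)) * (sN + pN * (1 - ρ⁻¹))
          + s₀ * qN * (1 - ρ)) :=
  stmt10_general p q ρ hp hq hρ hρ1 N i₀ hN p₀ q₀ r₀ s₀ pN qN rN sN hsum0 hp₀ hs₀ hsumN hqN y₀ y₁
    heq0 heq1
end
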